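/- Let L ∈ F_q^{N×ℓ} be a valid scalar linear encoder for G with query sets R_1,...,R_N, with codelength ℓ = minrk_q(G). Suppose that for each i ∈ [N] there are nonzero scalars α_{i,k} ∈ F_q (k ∈ R_i) and a vector u_i ∈ F_q^N with supp(u_i) ⊆ K_i such that e_i + u_i = ∑_{k∈R_i} α_{i,k} L_k, and let A be the N×N matrix whose i-th column is e_i + u_i (a fitting matrix corresponding to L). If z is a nonzero vector in the null space of A and S = supp(z), then ∑_{i∈S} |R_i| ≥ 2·minrk_q(G_S). -/

import Mathlib

/-- A valid scalar linear index code for the problem with side information sets `K`. -/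
def ValidScalarCode {N ℓ : ℕ} (q : Type) [Field q]
    (K : Fin N → Finset (Fin N))
    (L : Matrix (Fin N) (Fin ℓ) q)
    (R : Fin N → Finset (Fin ℓ)) : Prop :=
  ∀ i : Fin N,
    ∃ u : Fin N → q,
      (∀ j, u j ≠ 0 → j ∈ K i) ∧
      u + Pi.single i 1 ∈ Submodule.span q ((fun k (j : Fin N) => L j k) '' (R i : Set (Fin ℓ)))

/-- The minrank of the side information graph over `F_q`. -/
noncomputable def minrk (q : Type) [Field q] {N : ℕ} (K : Fin N → Finset (Fin N)) : ℕ :=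
  sInf {n : ℕ | ∃ A : Matrix (Fin N) (Fin N) q,
    (∀ i, A i i = 1) ∧ (∀ i j, j ≠ i → j ∉ K i → A j i = 0) ∧ A.rank = n}

/-- The minrank over `F_q` of the subproblem induced by the vertex subset `S`. -/
noncomputable def minrkOn (q : Type) [Field q] {N : ℕ} (K : Fin N → Finset (Fin N))
    (S : Finset (Fin N)) : ℕ :=
  sInf {n : ℕ | ∃ A : Matrix {i // i ∈ S} {i // i ∈ S} q,
    (∀ i, A i i = 1) ∧
    (∀ i j : {i // i ∈ S}, j ≠ i → (j : Fin N) ∉ K (i : Fin N) → A j i = 0) ∧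
    A.rank = n}

/-!
Collect the decoding coefficients into `C` with `C k i = α i k` for `k ∈ R i`, so that `A = L C`.
Optimality gives `ℓ = minrk ≤ rank A ≤ rank L ≤ ℓ`, so `L` has full column rank and `A z = 0`
forces `C z = 0`. Row `k` of `C z` sums the nonzero terms `α i k * z i` over the `i ∈ S` querying
`k`, so every query used by `S` is used at least twice, and double counting gives
`∑_{i ∈ S} |R i| ≥ 2 |T|` for `T = ⋃_{i ∈ S} R i`. Finally `A` restricted to `S` fits `G_S` and
factors through the `|T|` columns of `L` indexed by `T`, so `minrk(G_S) ≤ |T|`.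
-/

open Finset Matrix

section LinearAlgebra

variable {m n κ F : Type*} [Field F] [Fintype n]

theorem Matrix.mulVec_injective_of_card_le_rank_mul {p : Type*} [Fintype p]
    (L : Matrix m n F) (C : Matrix n p F) (h : Fintype.card n ≤ (L * C).rank) :
    Function.Injective L.mulVec := by
  rw [mulVec_injective_iff, linearIndependent_iff_card_le_finrank_span, Set.finrank,
    ← rank_eq_finrank_span_cols]
  exact h.trans (rank_mul_le_left L C)

theorem Matrix.rank_submatrix_mul_le_card {m' n' : Type*} [Fintype n']
    (L : Matrix m n F) (C : Matrix n κ F) (f : m' → m) (g : n' → κ) (T : Finset n)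
    (hC : ∀ k ∉ T, ∀ i, C k (g i) = 0) :
    ((L * C).submatrix f g).rank ≤ #T := by
  rw [submatrix_mul L C f id g Function.bijective_id]
  refine (rank_mul_le_right _ _).trans (rank_le_card_of_support_subset _ T ?_)
  intro k hk
  by_contra hkT
  exact hk (funext fun i => hC k hkT i)

end LinearAlgebra

theorem Finset.exists_ne_ne_zero_of_sum_eq_zero {ι M : Type*} [AddCommMonoid M] {s : Finset ι}
    {f : ι → M} (h : ∑ i ∈ s, f i = 0) {a : ι} (ha : a ∈ s) (hfa : f a ≠ 0) :
    ∃ b ∈ s, b ≠ a ∧ f b ≠ 0 := by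
  by_contra! hothers
  exact hfa (by rwa [sum_eq_single_of_mem a ha hothers] at h)

theorem Finset.two_mul_card_biUnion_le_sum_card {ι κ : Type*} [DecidableEq κ] (S : Finset ι)
    (R : ι → Finset κ) (h : ∀ k ∈ S.biUnion R, 1 < #{i ∈ S | k ∈ R i}) :
    2 * #(S.biUnion R) ≤ ∑ i ∈ S, #(R i) := by
  have hcount : ∑ k ∈ S.biUnion R, #{i ∈ S | k ∈ R i} = ∑ i ∈ S, #(R i) := by
    refine (sum_card_bipartiteAbove_eq_sum_card_bipartiteBelow (r := fun k i => k ∈ R i)).trans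
      (sum_congr rfl fun i hi => congrArg card ?_)
    exact filter_mem_eq_inter.trans (inter_eq_right.mpr (subset_biUnion_of_mem R hi))
  rw [← hcount, mul_comm, ← smul_eq_mul, ← sum_const]
  exact sum_le_sum h

def Fits {ι q : Type*} [Zero q] [One q] (K : ι → Finset ι) (A : Matrix ι ι q) : Prop :=
  (∀ i, A i i = 1) ∧ ∀ i j, j ≠ i → j ∉ K i → A j i = 0

section Minrank

variable {q : Type} [Field q] {N : ℕ} {K : Fin N → Finset (Fin N)} {A : Matrix (Fin N) (Fin N) q}

theorem minrk_le_rank (hA : Fits K A) : minrk q K ≤ A.rank :=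
  Nat.sInf_le ⟨A, hA.1, hA.2, rfl⟩

theorem minrkOn_le_rank_submatrix (hA : Fits K A) (S : Finset (Fin N)) :
    minrkOn q K S ≤ (A.submatrix (↑) (↑) : Matrix {i // i ∈ S} {i // i ∈ S} q).rank :=
  Nat.sInf_le ⟨_, fun i => hA.1 i,
    fun i j hji hj => hA.2 i j (Subtype.coe_ne_coe.mpr hji) hj, rfl⟩

end Minrank

def decodingMatrix {ι κ q : Type*} [DecidableEq κ] [Zero q] (R : ι → Finset κ) (α : ι → κ → q) :
    Matrix κ ι q :=
  Matrix.of fun k i => if k ∈ R i then α i k else 0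

section DecodingMatrix

variable {ι κ m q : Type*} [DecidableEq κ] [CommSemiring q] (R : ι → Finset κ) (α : ι → κ → q)

theorem mul_decodingMatrix_apply [Fintype κ] (L : Matrix m κ q) (j : m) (i : ι) :
    (L * decodingMatrix R α) j i = ∑ k ∈ R i, α i k * L j k := by
  simp only [mul_apply, decodingMatrix, of_apply, mul_ite, mul_zero, sum_ite_mem,
    univ_inter, mul_comm]

theorem decodingMatrix_apply_ne_zero_iff {α : ι → κ → q} (hα : ∀ i, ∀ k ∈ R i, α i k ≠ 0)
    (k : κ) (i : ι) : decodingMatrix R α k i ≠ 0 ↔ k ∈ R i := by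
  by_cases hk : k ∈ R i <;> simp [decodingMatrix, hk, hα i k]

end DecodingMatrix

theorem optimal_scalar_code_locality_lower_bound_general
    {N ℓ : ℕ} (q : Type) [Field q]
    (K : Fin N → Finset (Fin N)) (hK : ∀ i, i ∉ K i)
    (L : Matrix (Fin N) (Fin ℓ) q) (R : Fin N → Finset (Fin ℓ))
    (hℓ : ℓ = minrk q K)
    (u : Fin N → Fin N → q) (α : Fin N → Fin ℓ → q)
    (hu : ∀ i j, u i j ≠ 0 → j ∈ K i)
    (hα : ∀ i, ∀ k ∈ R i, α i k ≠ 0)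
    (heq : ∀ i j : Fin N, (Pi.single i (1 : q) : Fin N → q) j + u i j = ∑ k ∈ R i, α i k * L j k)
    (A : Matrix (Fin N) (Fin N) q)
    (hA : ∀ i j : Fin N, A j i = (Pi.single i (1 : q) : Fin N → q) j + u i j)
    (z : Fin N → q) (hAz : A.mulVec z = 0)
    (S : Finset (Fin N)) (hS : ∀ i, i ∈ S ↔ z i ≠ 0) :
    2 * minrkOn q K S ≤ ∑ i ∈ S, (R i).card := by
  classical
  have hfit : Fits K A := by
    refine ⟨fun i => ?_, fun i j hji hj => ?_⟩
    · rw [hA, Pi.single_eq_same, not_imp_comm.mp (hu i i) (hK i), add_zero]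
    · rw [hA, Pi.single_eq_of_ne hji, zero_add, not_imp_comm.mp (hu i j) hj]
  set C := decodingMatrix R α
  have hAC : A = L * C := by
    ext j i
    rw [hA, heq, mul_decodingMatrix_apply]
  have hLinj : Function.Injective L.mulVec := L.mulVec_injective_of_card_le_rank_mul C <| by
    rw [Fintype.card_fin, ← hAC, hℓ]
    exact minrk_le_rank hfit
  have hCz : C *ᵥ z = 0 := hLinj (by rw [mulVec_mulVec, ← hAC, hAz, mulVec_zero])
  have hshared : ∀ k ∈ S.biUnion R, 1 < #{i ∈ S | k ∈ R i} := by
    intro k hk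
    obtain ⟨a, haS, hka⟩ := mem_biUnion.mp hk
    have hterm : ∀ i, C k i * z i ≠ 0 ↔ i ∈ S ∧ k ∈ R i := fun i => by
      rw [mul_ne_zero_iff, decodingMatrix_apply_ne_zero_iff R hα, hS, and_comm]
    have hrow : ∑ i, C k i * z i = 0 := congrFun hCz k
    obtain ⟨b, -, hba, hb⟩ := exists_ne_ne_zero_of_sum_eq_zero hrow (mem_univ a)
      ((hterm a).mpr ⟨haS, hka⟩)
    exact one_lt_card.mpr
      ⟨a, mem_filter.mpr ⟨haS, hka⟩, b, mem_filter.mpr ((hterm b).mp hb), hba.symm⟩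
  calc 2 * minrkOn q K S
      ≤ 2 * #(S.biUnion R) := by
        gcongr
        refine (minrkOn_le_rank_submatrix hfit S).trans ?_
        rw [hAC]
        refine L.rank_submatrix_mul_le_card C _ _ _ fun k hk i => ?_
        by_contra hCk
        exact hk (mem_biUnion.mpr ⟨i, i.2, (decodingMatrix_apply_ne_zero_iff R hα k i).mp hCk⟩)
    _ ≤ ∑ i ∈ S, #(R i) := two_mul_card_biUnion_le_sum_card S R hshared

/-- Let `L` be a valid scalar linear encoder for `G` of optimal codelength
`ℓ = minrk_q(G)`, with decoding data: nonzero coefficients `α i k` (`k ∈ R i`) and side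
information vectors `u i` with `e_i + u_i = ∑_{k ∈ R i} α_{i,k} L_k`; let `A` be the fitting
matrix whose `i`-th column is `e_i + u_i`. If `z ≠ 0` lies in the null space of `A` and
`S = supp(z)`, then `∑_{i ∈ S} |R_i| ≥ 2·minrk_q(G_S)`. -/
theorem optimal_scalar_code_locality_lower_bound
    {N ℓ : ℕ} (q : Type) [Field q] [Fintype q]
    (K : Fin N → Finset (Fin N)) (hK : ∀ i, i ∉ K i)
    (L : Matrix (Fin N) (Fin ℓ) q) (R : Fin N → Finset (Fin ℓ))
    (hvalid : ValidScalarCode q K L R)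
    (hℓ : ℓ = minrk q K)
    (u : Fin N → Fin N → q) (α : Fin N → Fin ℓ → q)
    (hu : ∀ i j, u i j ≠ 0 → j ∈ K i)
    (hα : ∀ i, ∀ k ∈ R i, α i k ≠ 0)
    (heq : ∀ i j : Fin N, (Pi.single i (1 : q) : Fin N → q) j + u i j = ∑ k ∈ R i, α i k * L j k)
    (A : Matrix (Fin N) (Fin N) q)
    (hA : ∀ i j : Fin N, A j i = (Pi.single i (1 : q) : Fin N → q) j + u i j)
    (z : Fin N → q) (hz : z ≠ 0) (hAz : A.mulVec z = 0)
    (S : Finset (Fin N)) (hS : ∀ i, i ∈ S ↔ z i ≠ 0) :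
    2 * minrkOn q K S ≤ ∑ i ∈ S, (R i).card :=
  optimal_scalar_code_locality_lower_bound_general q K hK L R hℓ u α hu hα heq A hA z hAz S hS
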